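/- arXiv:2604.18746 — 3 statements merged into one kernel-verified Lean document; each statement's English description precedes it below -/
import Mathlib

section
/- Any d-detecting family on a finite set U with d ≥ 2 must have size at least |U| · log₂(d) / log₂(d·|U|+1); in particular, since the vector of subset sums over a family F of size s with values bounded by (d−1)|U| can take at most ((d−1)|U|+1)^s values, injectivity forces d^{|U|} ≤ ((d−1)|U|+1)^{|F|}. -/
/-! Each of the `d ^ |U|` functions `U → Fin d` is determined by its vector of sums over the
members of a detecting family `F`, and each such sum lies in `{0, …, (d - 1)|U|}`, so there are
at most `((d - 1)|U| + 1) ^ |F|` such vectors. Taking logarithms gives the second bound. -/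

def DetectingFamily {U : Type*} [Fintype U] (d : ℕ) (F : Finset (Finset U)) : Prop :=
  ∀ f g : U → Fin d, f ≠ g → ∃ S ∈ F, ∑ x ∈ S, (f x : ℕ) ≠ ∑ x ∈ S, (g x : ℕ)

open Finset

theorem sum_fin_val_le_mul_card {U : Type*} {d : ℕ} (f : U → Fin d) (S : Finset U) :
    ∑ x ∈ S, (f x : ℕ) ≤ (d - 1) * #S := by
  rw [mul_comm, ← smul_eq_mul]
  exact sum_le_card_nsmul S _ _ fun x _ => Nat.le_sub_one_of_lt (f x).isLt

section SubsetSums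

variable {U : Type*} [Fintype U] {d : ℕ}

theorem sum_fin_val_lt (f : U → Fin d) (S : Finset U) :
    ∑ x ∈ S, (f x : ℕ) < (d - 1) * Fintype.card U + 1 :=
  Nat.lt_succ_of_le <| (sum_fin_val_le_mul_card f S).trans <|
    Nat.mul_le_mul_left _ (card_le_univ S)

def subsetSumVector (F : Finset (Finset U)) (f : U → Fin d) :
    F → Fin ((d - 1) * Fintype.card U + 1) :=
  fun S => ⟨∑ x ∈ S.1, (f x : ℕ), sum_fin_val_lt f S.1⟩

theorem DetectingFamily.injective_subsetSumVector {F : Finset (Finset U)}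
    (hF : DetectingFamily d F) : Function.Injective (subsetSumVector (d := d) F) := by
  intro f g hfg
  by_contra hne
  obtain ⟨S, hS, hsum⟩ := hF f g hne
  exact hsum (congrArg Fin.val (congrFun hfg ⟨S, hS⟩))

theorem DetectingFamily.pow_card_le {F : Finset (Finset U)} (hF : DetectingFamily d F) :
    d ^ Fintype.card U ≤ ((d - 1) * Fintype.card U + 1) ^ #F := by
  classical
  simpa only [Fintype.card_fun, Fintype.card_fin, Fintype.card_coe] using
    Fintype.card_le_of_injective _ hF.injective_subsetSumVector

end SubsetSums

theorem Real.mul_logb_le_mul_logb_of_pow_le_pow {c a b : ℝ} {n k : ℕ} (hc : 1 < c)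
    (ha : 0 ≤ a) (hb : 1 ≤ b) (h : a ^ n ≤ b ^ k) : n * logb c a ≤ k * logb c b := by
  rcases ha.eq_or_lt with rfl | ha
  · simpa using mul_nonneg k.cast_nonneg (logb_nonneg hc hb)
  · simpa only [logb_pow] using logb_le_logb_of_le hc (pow_pos ha n) h

theorem stmt3_general {U : Type*} [Fintype U] (d : ℕ)
    (F : Finset (Finset U)) (hF : DetectingFamily d F) :
    d ^ Fintype.card U ≤ ((d - 1) * Fintype.card U + 1) ^ F.card ∧
    (Fintype.card U : ℝ) * Real.logb 2 d / Real.logb 2 (d * Fintype.card U + 1)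
      ≤ (F.card : ℝ) := by
  set n := Fintype.card U
  have hcount := hF.pow_card_le
  refine ⟨hcount, ?_⟩
  have hbase : 1 ≤ (d : ℝ) * n + 1 := le_add_of_nonneg_left (by positivity)
  have hpow : (d : ℝ) ^ n ≤ ((d : ℝ) * n + 1) ^ F.card := by
    have : d ^ n ≤ (d * n + 1) ^ F.card :=
      hcount.trans (Nat.pow_le_pow_left (by gcongr; exact Nat.sub_le d 1) _)
    exact_mod_cast this
  refine div_le_of_le_mul₀ (Real.logb_nonneg one_lt_two hbase) F.card.cast_nonneg ?_
  exact Real.mul_logb_le_mul_logb_of_pow_le_pow one_lt_two d.cast_nonneg hbase hpow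

/-- Lower bound on the size of a `d`-detecting family: injectivity of the subset-sum
vector forces `d ^ |U| ≤ ((d−1)|U|+1) ^ |F|`, and hence
`|F| ≥ |U| · log₂ d / log₂ (d·|U|+1)`. -/
theorem stmt3 {U : Type*} [Fintype U] [Nonempty U] (d : ℕ) (hd : 2 ≤ d)
    (F : Finset (Finset U)) (hF : DetectingFamily d F) :
    d ^ Fintype.card U ≤ ((d - 1) * Fintype.card U + 1) ^ F.card ∧
    (Fintype.card U : ℝ) * Real.logb 2 d / Real.logb 2 (d * Fintype.card U + 1)
      ≤ (F.card : ℝ) :=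
  stmt3_general d F hF
end

section
/- Let G be a graph, c a capacity function, and S a capacitated vertex cover of G with |S| ≤ k. If a vertex v has at least k+1 pendant neighbors (degree-one vertices adjacent only to v), then v ∈ S. -/
/-- `S` together with the edge-assignment `f` is a capacitated vertex cover of `G`
with capacities `c`: every edge is assigned to one of its endpoints, that endpoint
lies in `S`, and every vertex of `S` receives at most `c v` edges. -/
def IsCVC {V : Type*} [Fintype V] [DecidableEq V] (G : SimpleGraph V)
    [DecidableRel G.Adj] (c : V → ℕ) (S : Finset V) (f : Sym2 V → V) : Prop :=
  (∀ e ∈ G.edgeFinset, f e ∈ e ∧ f e ∈ S) ∧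
  ∀ v ∈ S, (G.edgeFinset.filter (fun e => f e = v)).card ≤ c v

theorem IsCVC.mem_or_mem_of_adj {V : Type*} [Fintype V] [DecidableEq V] {G : SimpleGraph V}
    [DecidableRel G.Adj] {c : V → ℕ} {S : Finset V} {f : Sym2 V → V}
    (hS : IsCVC G c S f) {u v : V} (huv : G.Adj u v) : u ∈ S ∨ v ∈ S := by
  obtain ⟨hmem, hin⟩ := hS.1 s(u, v) (G.mem_edgeFinset.2 huv)
  rcases Sym2.mem_iff.1 hmem with h | h
  · exact .inl (h ▸ hin)
  · exact .inr (h ▸ hin)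

/-- If `S` is a capacitated vertex cover of size at most `k` and `v` has at least
`k+1` pendant neighbors, then `v ∈ S`. -/
theorem stmt5 {V : Type*} [Fintype V] [DecidableEq V] (G : SimpleGraph V)
    [DecidableRel G.Adj] (c : V → ℕ) (k : ℕ) (S : Finset V) (f : Sym2 V → V)
    (hS : IsCVC G c S f) (hk : S.card ≤ k)
    (v : V) (P : Finset V) (hP : k + 1 ≤ P.card)
    (hpend : ∀ u ∈ P, G.degree u = 1 ∧ G.Adj u v) :
    v ∈ S := by
  by_contra hv
  have hPS : P ⊆ S := fun u hu => (hS.mem_or_mem_of_adj (hpend u hu).2).resolve_right hv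
  have := Finset.card_le_card hPS
  omega
end

section
/- Feasible orientations of minimum size compose along cuts: let G have linear arrangement π, and for i ∈ [0,n] call an orientation i-feasible if every vertex among the first i respects its capacity, with i-size the number of the first i vertices of positive in-degree. If O' is (i−1)-feasible with (i−1)-signature σ' and one reorients exactly the edges from v_i to later vertices according to a target signature σ that agrees with σ' on δ_{i−1} ∩ δ_i, then the resulting orientation O has i-signature σ, every vertex among the first i−1 has the same in-degree in O as in O', and indeg_O(v_i) = a_i(σ') + b_i(σ). -/
/-!
Only the edges joining `v_i` to later vertices are reoriented. None of them contains a vertex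
before `v_i`, so the in-degrees of those vertices cannot change; every other edge of `δ_{i+1}`
already lies in `δ_i`, where `σ` agrees with `σ'`. Finally an edge pointing into `v_i` either
comes from an earlier vertex, and keeps its orientation from `O'`, or goes to a later vertex,
and is oriented by `σ`.
-/

/-- The set of edges of `G` crossing the cut after the first `i` vertices of the
linear arrangement `π`. -/
def cutEdges {V : Type*} {n : ℕ} (G : SimpleGraph V) (π : V ≃ Fin n) (i : ℕ) :
    Set (Sym2 V) :=
  {e ∈ G.edgeSet | ∃ u w, e = s(u, w) ∧ (π u : ℕ) < i ∧ i ≤ (π w : ℕ)}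

lemma Sym2.not_mem_of_lt {V : Type*} (r : V → ℕ) {x v w : V} (hv : r x < r v) (hw : r x < r w) :
    x ∉ s(v, w) := by
  rw [Sym2.mem_iff]
  rintro (rfl | rfl) <;> omega

lemma sep_eq_sep_of_eqOn_compl {α β : Type*} {E S : Set α} {f g : α → β} {x : β}
    (hgf : Set.EqOn g f Sᶜ) (hf : ∀ e ∈ E, e ∈ S → f e ≠ x) (hg : ∀ e ∈ E, e ∈ S → g e ≠ x) :
    {e ∈ E | g e = x} = {e ∈ E | f e = x} := by
  ext e
  by_cases he : e ∈ S
  · simp only [Set.mem_ofPred_eq]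
    exact ⟨fun h => absurd h.2 (hg e h.1 he), fun h => absurd h.2 (hf e h.1 he)⟩
  · simp only [Set.mem_ofPred_eq, hgf he]

section ForwardEdges

variable {V : Type*} {n : ℕ} {G : SimpleGraph V} {π : V ≃ Fin n} {i : Fin n}

def IsForwardEdge (π : V ≃ Fin n) (i : Fin n) (e : Sym2 V) : Prop :=
  ∃ w, e = s(π.symm i, w) ∧ (i : ℕ) < (π w : ℕ)

def IsBackwardEdge (π : V ≃ Fin n) (i : Fin n) (e : Sym2 V) : Prop :=
  ∃ u, e = s(u, π.symm i) ∧ (π u : ℕ) < (i : ℕ)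

def IsForwardReorientation (π : V ≃ Fin n) (i : Fin n) (f' σ g : Sym2 V → V) : Prop :=
  ∀ e, (IsForwardEdge π i e → g e = σ e) ∧ (¬ IsForwardEdge π i e → g e = f' e)

lemma IsForwardEdge.not_mem_of_lt {e : Sym2 V} (he : IsForwardEdge π i e) {x : V}
    (hx : (π x : ℕ) < i) : x ∉ e := by
  obtain ⟨w, rfl, hw⟩ := he
  exact Sym2.not_mem_of_lt (fun y => (π y : ℕ)) (by simpa using hx) (by omega)

lemma IsForwardEdge.not_isBackwardEdge {e : Sym2 V} (he : IsForwardEdge π i e) :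
    ¬ IsBackwardEdge π i e := by
  rintro ⟨u, rfl, hu⟩
  exact he.not_mem_of_lt hu (Sym2.mem_mk_left u _)

lemma IsForwardEdge.mem_cutEdges_succ {e : Sym2 V} (he : IsForwardEdge π i e)
    (hG : e ∈ G.edgeSet) : e ∈ cutEdges G π (i + 1) := by
  obtain ⟨w, rfl, hw⟩ := he
  exact ⟨hG, π.symm i, w, rfl, by simp, hw⟩

lemma mem_cutEdges_of_mem_cutEdges_succ {e : Sym2 V} (he : e ∈ cutEdges G π (i + 1))
    (hfwd : ¬ IsForwardEdge π i e) : e ∈ cutEdges G π i := by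
  obtain ⟨hG, u, w, rfl, hu, hw⟩ := he
  refine ⟨hG, u, w, rfl, lt_of_le_of_ne (Nat.lt_succ_iff.mp hu) fun hui => hfwd ?_, by omega⟩
  obtain rfl : u = π.symm i := (π.symm_apply_eq.mpr (Fin.ext hui.symm)).symm
  exact ⟨w, rfl, by omega⟩

lemma isBackwardEdge_of_mem_of_not_isForwardEdge {e : Sym2 V} (hG : e ∈ G.edgeSet)
    (hv : π.symm i ∈ e) (hfwd : ¬ IsForwardEdge π i e) : IsBackwardEdge π i e := by
  obtain ⟨u, rfl⟩ := Sym2.mem_iff_exists.mp hv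
  have hne : (π u : ℕ) ≠ i := fun h =>
    G.irrefl (G.mem_edgeSet.mp (by rwa [π.symm_apply_eq.mpr (Fin.ext h.symm)] at hG))
  exact ⟨u, Sym2.eq_swap, by by_contra! h; exact hfwd ⟨u, rfl, by omega⟩⟩

namespace IsForwardReorientation

variable {f' σ g : Sym2 V → V} (hg : IsForwardReorientation π i f' σ g)
include hg

lemma eq_on_cutEdges_succ (hagree : ∀ e ∈ cutEdges G π i ∩ cutEdges G π (i + 1), σ e = f' e) :
    ∀ e ∈ cutEdges G π (i + 1), g e = σ e := by
  intro e he
  by_cases hfwd : IsForwardEdge π i e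
  · exact (hg e).1 hfwd
  · rw [(hg e).2 hfwd, hagree e ⟨mem_cutEdges_of_mem_cutEdges_succ he hfwd, he⟩]

lemma inEdges_eq_of_lt (hf' : ∀ e ∈ G.edgeSet, f' e ∈ e)
    (hσ : ∀ e ∈ cutEdges G π (i + 1), σ e ∈ e) {x : V} (hx : (π x : ℕ) < i) :
    {e ∈ G.edgeSet | g e = x} = {e ∈ G.edgeSet | f' e = x} :=
  sep_eq_sep_of_eqOn_compl (S := {e | IsForwardEdge π i e}) (fun e he => (hg e).2 he)
    (fun e hG hfwd hfe => hfwd.not_mem_of_lt hx (hfe ▸ hf' e hG))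
    (fun e hG hfwd hge => hfwd.not_mem_of_lt hx
      (hge ▸ (hg e).1 hfwd ▸ hσ e (hfwd.mem_cutEdges_succ hG)))

lemma inEdges_eq_union (hf' : ∀ e ∈ G.edgeSet, f' e ∈ e) :
    {e ∈ G.edgeSet | g e = π.symm i} =
      {e ∈ G.edgeSet | f' e = π.symm i ∧ IsBackwardEdge π i e} ∪
      {e ∈ G.edgeSet | σ e = π.symm i ∧ IsForwardEdge π i e} := by
  ext e
  simp only [Set.mem_ofPred_eq, Set.mem_union]
  by_cases hfwd : IsForwardEdge π i e
  · simp only [(hg e).1 hfwd, hfwd, hfwd.not_isBackwardEdge]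
    tauto
  · simp only [(hg e).2 hfwd, hfwd]
    exact ⟨fun ⟨hG, hfe⟩ => .inl ⟨hG, hfe,
      isBackwardEdge_of_mem_of_not_isForwardEdge hG (hfe ▸ hf' e hG) hfwd⟩, by tauto⟩

end IsForwardReorientation

lemma disjoint_backward_forward (p q : Sym2 V → Prop) :
    Disjoint {e ∈ G.edgeSet | p e ∧ IsBackwardEdge π i e}
      {e ∈ G.edgeSet | q e ∧ IsForwardEdge π i e} :=
  Set.disjoint_left.mpr fun _ hb hf => hf.2.2.not_isBackwardEdge hb.2.2

end ForwardEdges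

theorem stmt15_general {V : Type*} {n : ℕ} (G : SimpleGraph V) (π : V ≃ Fin n)
    (i : Fin n) (f' σ g : Sym2 V → V)
    (hf' : ∀ e ∈ G.edgeSet, f' e ∈ e)
    (hσ : ∀ e ∈ cutEdges G π ((i : ℕ) + 1), σ e ∈ e)
    (hagree : ∀ e ∈ cutEdges G π (i : ℕ) ∩ cutEdges G π ((i : ℕ) + 1), σ e = f' e)
    (hg : ∀ e : Sym2 V,
      ((∃ w, e = s(π.symm i, w) ∧ (i : ℕ) < (π w : ℕ)) → g e = σ e) ∧
      (¬ (∃ w, e = s(π.symm i, w) ∧ (i : ℕ) < (π w : ℕ)) → g e = f' e)) :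
    (∀ e ∈ cutEdges G π ((i : ℕ) + 1), g e = σ e) ∧
    (∀ v : V, (π v : ℕ) < (i : ℕ) →
      {e ∈ G.edgeSet | g e = v}.ncard = {e ∈ G.edgeSet | f' e = v}.ncard) ∧
    {e ∈ G.edgeSet | g e = π.symm i}.ncard =
      {e ∈ G.edgeSet |
        f' e = π.symm i ∧ ∃ u, e = s(u, π.symm i) ∧ (π u : ℕ) < (i : ℕ)}.ncard +
      {e ∈ G.edgeSet |
        σ e = π.symm i ∧ ∃ w, e = s(π.symm i, w) ∧ (i : ℕ) < (π w : ℕ)}.ncard := by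
  have : Finite V := .of_equiv _ π.symm
  have hg : IsForwardReorientation π i f' σ g := hg
  refine ⟨hg.eq_on_cutEdges_succ hagree,
    fun v hv => congrArg Set.ncard (hg.inEdges_eq_of_lt hf' hσ hv), ?_⟩
  rw [hg.inEdges_eq_union hf', Set.ncard_union_eq (disjoint_backward_forward _ _)]
  rfl

/-- Composition along cuts: starting from an orientation `f'` with `(i)`-cut
signature extending to a target signature `σ` that agrees with it on
`δ_i ∩ δ_{i+1}`, reorienting exactly the edges from `v_i` to later vertices
according to `σ` yields an orientation `g` whose `(i+1)`-cut signature is `σ`,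
which preserves the in-degrees of all earlier vertices, and in which the in-degree
of `v_i` equals `a_i(σ') + b_i(σ)`. -/
theorem stmt15 {V : Type*} [Fintype V] {n : ℕ} (G : SimpleGraph V) (π : V ≃ Fin n)
    (i : Fin n) (f' σ g : Sym2 V → V)
    (hf' : ∀ e ∈ G.edgeSet, f' e ∈ e)
    (hσ : ∀ e ∈ cutEdges G π ((i : ℕ) + 1), σ e ∈ e)
    (hagree : ∀ e ∈ cutEdges G π (i : ℕ) ∩ cutEdges G π ((i : ℕ) + 1), σ e = f' e)
    (hg : ∀ e : Sym2 V,
      ((∃ w, e = s(π.symm i, w) ∧ (i : ℕ) < (π w : ℕ)) → g e = σ e) ∧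
      (¬ (∃ w, e = s(π.symm i, w) ∧ (i : ℕ) < (π w : ℕ)) → g e = f' e)) :
    (∀ e ∈ cutEdges G π ((i : ℕ) + 1), g e = σ e) ∧
    (∀ v : V, (π v : ℕ) < (i : ℕ) →
      {e ∈ G.edgeSet | g e = v}.ncard = {e ∈ G.edgeSet | f' e = v}.ncard) ∧
    {e ∈ G.edgeSet | g e = π.symm i}.ncard =
      {e ∈ G.edgeSet |
        f' e = π.symm i ∧ ∃ u, e = s(u, π.symm i) ∧ (π u : ℕ) < (i : ℕ)}.ncard +
      {e ∈ G.edgeSet |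
        σ e = π.symm i ∧ ∃ w, e = s(π.symm i, w) ∧ (i : ℕ) < (π w : ℕ)}.ncard :=
  stmt15_general G π i f' σ g hf' hσ hagree hg
end
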